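/- Let K ⊆ V ⊗ k be a characteristic subspace with k-basis x₁, …, x_{σ₀}, and let Ṽ = V ⊕ U₂ as above. The assignment B ↦ K̃(B) defines a bijection from the quotient set {B ∈ V ⊗ k : B − φ(B) ∈ K + φ(K)}/K onto the set of characteristic subspaces K̃ ⊆ Ṽ ⊗ k such that v ⊗ 1 ∉ K̃ and (K̃ ∩ ((V ⊕ ⟨v⟩) ⊗ k))/(k·(v ⊗ 1)) = K under the canonical identification v^⊥/⟨v⟩ = V. In particular, for each B with B − φ(B) ∈ K + φ(K) the subspace K̃(B) is characteristic with v ⊗ 1 ∉ K̃(B) and cuts out K as above; K̃(B) = K̃(B′) if and only if B − B′ ∈ K; and every characteristic subspace K̃ with these two properties equals K̃(B) for some such B. -/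

import Mathlib

open TensorProduct

noncomputable section

variable (p : ℕ) [Fact p.Prime] (k : Type) [Field k] [CharP k p] [Algebra (ZMod p) k]

/-- The `p`-power (Frobenius) map on `k` as a `ZMod p`-linear map. -/
def frobLin : k →ₗ[ZMod p] k where
  toFun a := a ^ p
  map_add' a b := add_pow_char a b p
  map_smul' c a := by
    simp only [RingHom.id_apply]
    rw [Algebra.smul_def, Algebra.smul_def, mul_pow, ← map_pow, ZMod.pow_card]

variable (V : Type) [AddCommGroup V] [Module (ZMod p) V]

/-- The Frobenius-semilinear endomorphism `φ = id_V ⊗ (λ ↦ λ^p)` of `k ⊗[𝔽_p] V`. -/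
def frobT : (k ⊗[ZMod p] V) →ₛₗ[frobenius k p] (k ⊗[ZMod p] V) where
  toFun := LinearMap.rTensor V (frobLin p k)
  map_add' := map_add _
  map_smul' c x := by
    induction x using TensorProduct.induction_on with
    | zero => simp
    | tmul a v =>
        simp [smul_tmul', frobLin, frobenius_def, mul_pow]
    | add x y hx hy => simp_all [smul_add]

variable [IsAlgClosed k]

instance : RingHomSurjective (frobenius k p) := ⟨surjective_frobenius k p⟩

/-- The base change to `k` of the bilinear form `B`. -/
abbrev bcForm (B : LinearMap.BilinForm (ZMod p) V) :
    LinearMap.BilinForm k (k ⊗[ZMod p] V) :=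
  LinearMap.BilinForm.baseChange k B

variable (σ₀ : ℕ) (B : LinearMap.BilinForm (ZMod p) V)

/-- `K ⊆ V ⊗ k` is a characteristic subspace: totally isotropic of dimension `σ₀`,
and `K + φ(K)` has dimension `σ₀ + 1`. -/
def IsCharacteristicSub (K : Submodule k (k ⊗[ZMod p] V)) : Prop :=
  (∀ x ∈ K, ∀ y ∈ K, bcForm p k V B x y = 0) ∧
  Module.finrank k K = σ₀ ∧
  Module.finrank k ↥(K ⊔ Submodule.map (frobT p k V) K) = σ₀ + 1

/-- `K` is strictly characteristic if moreover `∑ᵢ φ^i(K) = V ⊗ k`. -/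
def IsStrictlyCharacteristicSub (K : Submodule k (k ⊗[ZMod p] V)) : Prop :=
  IsCharacteristicSub p k V σ₀ B K ∧
  (⨆ i : ℕ, (Submodule.map (frobT p k V))^[i] K) = ⊤

/-- `l_K = K ∩ φ(K) ∩ ⋯ ∩ φ^{σ₀ − 1}(K)`. -/
def lK (K : Submodule k (k ⊗[ZMod p] V)) : Submodule k (k ⊗[ZMod p] V) :=
  ⨅ i : Fin σ₀, (Submodule.map (frobT p k V))^[(i : ℕ)] K

/-- The group `O_K(V)` of isometries of `(V, B)` such that `g ⊗ k` maps `K` to itself. -/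
def OK (K : Submodule k (k ⊗[ZMod p] V)) : Subgroup (V ≃ₗ[ZMod p] V) where
  carrier := {g : V ≃ₗ[ZMod p] V | (∀ x y : V, B (g x) (g y) = B x y) ∧
    Submodule.map (LinearMap.baseChange k (g : V →ₗ[ZMod p] V)) K = K}
  one_mem' := by
    refine ⟨fun x y => rfl, ?_⟩
    rw [LinearEquiv.coe_toLinearMap_one, LinearMap.baseChange_id, Submodule.map_id]
  mul_mem' := by
    rintro g h ⟨hg1, hg2⟩ ⟨hh1, hh2⟩
    refine ⟨fun x y => (hg1 (h x) (h y)).trans (hh1 x y), ?_⟩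
    have hco : ((g * h : V ≃ₗ[ZMod p] V) : V →ₗ[ZMod p] V)
        = (g : V →ₗ[ZMod p] V).comp (h : V →ₗ[ZMod p] V) := rfl
    rw [hco, LinearMap.baseChange_comp, Submodule.map_comp, hh2, hg2]
  inv_mem' := by
    rintro g ⟨hg1, hg2⟩
    constructor
    · intro x y
      have h1 : g (g⁻¹ x) = x := g.apply_symm_apply x
      have h2 : g (g⁻¹ y) = y := g.apply_symm_apply y
      have := hg1 (g⁻¹ x) (g⁻¹ y)
      rw [h1, h2] at this
      exact this.symm
    · conv_lhs => rw [← hg2]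
      rw [← Submodule.map_comp, ← LinearMap.baseChange_comp]
      have hco : ((g⁻¹ : V ≃ₗ[ZMod p] V) : V →ₗ[ZMod p] V).comp (g : V →ₗ[ZMod p] V)
          = LinearMap.id := by
        ext x
        exact g.symm_apply_apply x
      rw [hco, LinearMap.baseChange_id, Submodule.map_id]

end


section Hyperbolic

variable (p : ℕ) [Fact p.Prime] (k : Type) [Field k] [CharP k p] [Algebra (ZMod p) k]
  [IsAlgClosed k] (V : Type) [AddCommGroup V] [Module (ZMod p) V]
  (σ₀ : ℕ) (B : LinearMap.BilinForm (ZMod p) V)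

/-- The bilinear form on `Ṽ = V ⊕ U₂`, where `U₂` is the hyperbolic plane with basis
`v = (1,0)`, `w = (0,1)` satisfying `⟨v,v⟩ = ⟨w,w⟩ = 0` and `⟨v,w⟩ = -1`. -/
def Btil : LinearMap.BilinForm (ZMod p) (V × ZMod p × ZMod p) :=
  LinearMap.mk₂ (ZMod p)
    (fun x y => B x.1 y.1 - x.2.1 * y.2.2 - x.2.2 * y.2.1)
    (fun x x' y => by
      simp only [Prod.fst_add, Prod.snd_add, map_add, LinearMap.add_apply]; ring)
    (fun c x y => by
      simp only [Prod.smul_fst, Prod.smul_snd, map_smul, LinearMap.smul_apply,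
        smul_eq_mul]; ring)
    (fun x y y' => by
      simp only [Prod.fst_add, Prod.snd_add, map_add]; ring)
    (fun c x y => by
      simp only [Prod.smul_fst, Prod.smul_snd, map_smul, smul_eq_mul]; ring)

/-- The subspace `V ⊕ ⟨v⟩` of `Ṽ`; it equals `v^⊥`. -/
def Wzero : Submodule (ZMod p) (V × ZMod p × ZMod p) :=
  (⊤ : Submodule (ZMod p) V).prod ((⊤ : Submodule (ZMod p) (ZMod p)).prod ⊥)

/-- The subspace `K̃(B)` of `Ṽ ⊗ k`, spanned by `xᵢ + ⟨xᵢ,B⟩v` for `1 ≤ i ≤ σ₀`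
together with `w + B + (⟨B,B⟩/2)v`. -/
def Ktil (x : Fin σ₀ → k ⊗[ZMod p] V) (Bf : k ⊗[ZMod p] V) :
    Submodule k (k ⊗[ZMod p] (V × ZMod p × ZMod p)) :=
  Submodule.span k
    ((Set.range fun i =>
        LinearMap.baseChange k (LinearMap.inl (ZMod p) V (ZMod p × ZMod p)) (x i)
          + bcForm p k V B (x i) Bf •
              ((1 : k) ⊗ₜ[ZMod p] ((0, 1, 0) : V × ZMod p × ZMod p)))
      ∪ {((1 : k) ⊗ₜ[ZMod p] ((0, 0, 1) : V × ZMod p × ZMod p))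
          + LinearMap.baseChange k (LinearMap.inl (ZMod p) V (ZMod p × ZMod p)) Bf
          + (bcForm p k V B Bf Bf / 2) •
              ((1 : k) ⊗ₜ[ZMod p] ((0, 1, 0) : V × ZMod p × ZMod p))})

/-- The condition `B - φ(B) ∈ K + φ(K)` on an element `B ∈ V ⊗ k`. -/
def IsBField (K : Submodule k (k ⊗[ZMod p] V)) (Bf : k ⊗[ZMod p] V) : Prop :=
  Bf - frobT p k V Bf ∈ K ⊔ Submodule.map (frobT p k V) K

/-- `L ⊆ Ṽ ⊗ k` is a characteristic subspace with `v ⊗ 1 ∉ L` which cuts out `K`, i.e.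
`(L ∩ ((V ⊕ ⟨v⟩) ⊗ k))/(k·(v ⊗ 1)) = K` under the identification `v^⊥/⟨v⟩ = V`. -/
def IsGoodExtension (K : Submodule k (k ⊗[ZMod p] V))
    (L : Submodule k (k ⊗[ZMod p] (V × ZMod p × ZMod p))) : Prop :=
  IsCharacteristicSub p k (V × ZMod p × ZMod p) (σ₀ + 1) (Btil p V B) L ∧
  ((1 : k) ⊗ₜ[ZMod p] ((0, 1, 0) : V × ZMod p × ZMod p)) ∉ L ∧
  Submodule.map (LinearMap.baseChange k (LinearMap.fst (ZMod p) V (ZMod p × ZMod p)))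
    (L ⊓ Submodule.baseChange k (Wzero p V)) = K

end Hyperbolic

set_option linter.unusedSectionVars false
set_option maxHeartbeats 1000000
set_option synthInstance.maxHeartbeats 400000

section AuxLemmas
variable (p : ℕ) [Fact p.Prime] (k : Type) [Field k] [CharP k p] [Algebra (ZMod p) k]
  [IsAlgClosed k] (V : Type) [AddCommGroup V] [Module (ZMod p) V]

lemma pnz : p ≠ 0 := (Fact.out (p := p.Prime)).ne_zero

lemma frobT_tmul (c : k) (m : V) : frobT p k V (c ⊗ₜ m) = (c^p) ⊗ₜ m := rfl

lemma bc_frob (β : LinearMap.BilinForm (ZMod p) V) (u v : k ⊗[ZMod p] V) :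
    bcForm p k V β (frobT p k V u) (frobT p k V v) = (bcForm p k V β u v)^p := by
  induction u using TensorProduct.induction_on with
  | zero => simp [zero_pow (pnz p)]
  | add u₁ u₂ h1 h2 => simp [map_add, h1, h2, add_pow_char]
  | tmul c m =>
    induction v using TensorProduct.induction_on with
    | zero => simp [zero_pow (pnz p)]
    | add v₁ v₂ h1 h2 => simp [map_add, h1, h2, add_pow_char]
    | tmul d n =>
      rw [frobT_tmul, frobT_tmul]
      simp only [LinearMap.BilinForm.baseChange_tmul]
      rw [Algebra.smul_def, Algebra.smul_def, mul_pow, mul_pow, ← map_pow, ZMod.pow_card]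

end AuxLemmas

section Generic
variable {k : Type} [Field k]

-- rank-nullity helper
lemma finrank_eq_map_add_inf_ker {X Y : Type} [AddCommGroup X] [Module k X]
    [AddCommGroup Y] [Module k Y] (M : Submodule k X) [FiniteDimensional k M]
    (f : X →ₗ[k] Y) :
    Module.finrank k M =
      Module.finrank k (Submodule.map f M) + Module.finrank k ↥(M ⊓ LinearMap.ker f) := by
  have h := LinearMap.finrank_range_add_finrank_ker (f.domRestrict M)
  rw [LinearMap.range_domRestrict] at h
  have hker : Module.finrank k ↥(LinearMap.ker (f.domRestrict M))
      = Module.finrank k ↥(M ⊓ LinearMap.ker f) := by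
    have e1 : LinearMap.ker (f.domRestrict M) = Submodule.comap M.subtype (LinearMap.ker f) := by
      ext z; simp [LinearMap.mem_ker]
    rw [e1]
    have e2 := Submodule.map_comap_subtype M (LinearMap.ker f)
    rw [← e2]
    exact (Submodule.equivMapOfInjective M.subtype (Submodule.injective_subtype M) _).finrank_eq
  rw [hker] at h
  exact h.symm

-- total isotropy on a span
lemma isotropic_span {X : Type} [AddCommGroup X] [Module k X]
    (F : LinearMap.BilinForm k X) (s : Set X)
    (h : ∀ a ∈ s, ∀ b ∈ s, F a b = 0) :
    ∀ x ∈ Submodule.span k s, ∀ y ∈ Submodule.span k s, F x y = 0 := by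
  intro x hx
  induction hx using Submodule.span_induction with
  | mem a ha =>
    intro y hy
    induction hy using Submodule.span_induction with
    | mem b hb => exact h a ha b hb
    | zero => simp
    | add y₁ y₂ _ _ h1 h2 => simp [h1, h2]
    | smul c y _ h1 => simp [h1]
  | zero => intro y hy; simp
  | add x₁ x₂ _ _ h1 h2 => intro y hy; simp [h1 y hy, h2 y hy]
  | smul c x _ h1 => intro y hy; simp [h1 y hy]

end Generic

noncomputable section Tilde
variable (p : ℕ) [Fact p.Prime] (k : Type) [Field k] [CharP k p] [Algebra (ZMod p) k]
  [IsAlgClosed k] (V : Type) [AddCommGroup V] [Module (ZMod p) V]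

local notation "Vt" => (V × ZMod p × ZMod p)

def ev : k ⊗[ZMod p] Vt := (1:k) ⊗ₜ ((0,1,0))
def fv : k ⊗[ZMod p] Vt := (1:k) ⊗ₜ ((0,0,1))
def ιV : (k ⊗[ZMod p] V) →ₗ[k] (k ⊗[ZMod p] Vt) :=
  LinearMap.baseChange k (LinearMap.inl (ZMod p) V (ZMod p × ZMod p))
def πV : (k ⊗[ZMod p] Vt) →ₗ[k] (k ⊗[ZMod p] V) :=
  LinearMap.baseChange k (LinearMap.fst (ZMod p) V (ZMod p × ZMod p))
def πe : (k ⊗[ZMod p] Vt) →ₗ[k] k :=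
  (TensorProduct.AlgebraTensorModule.rid (ZMod p) k k).toLinearMap.comp
    (LinearMap.baseChange k ((LinearMap.fst (ZMod p) (ZMod p) (ZMod p)).comp
      (LinearMap.snd (ZMod p) V (ZMod p × ZMod p))))
def πf : (k ⊗[ZMod p] Vt) →ₗ[k] k :=
  (TensorProduct.AlgebraTensorModule.rid (ZMod p) k k).toLinearMap.comp
    (LinearMap.baseChange k ((LinearMap.snd (ZMod p) (ZMod p) (ZMod p)).comp
      (LinearMap.snd (ZMod p) V (ZMod p × ZMod p))))

@[simp] lemma ιV_tmul (c : k) (m : V) : ιV p k V (c ⊗ₜ m) = c ⊗ₜ (m, 0, 0) := rfl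
@[simp] lemma πV_tmul (c : k) (m : Vt) : πV p k V (c ⊗ₜ m) = c ⊗ₜ m.1 := rfl
@[simp] lemma πe_tmul (c : k) (m : Vt) : πe p k V (c ⊗ₜ m) = m.2.1 • c := rfl
@[simp] lemma πf_tmul (c : k) (m : Vt) : πf p k V (c ⊗ₜ m) = m.2.2 • c := rfl

@[simp] lemma πV_ι (z : k ⊗[ZMod p] V) : πV p k V (ιV p k V z) = z := by
  induction z using TensorProduct.induction_on with
  | zero => simp
  | tmul c m => simp
  | add a b h1 h2 => simp [map_add, h1, h2]

@[simp] lemma πe_ι (z : k ⊗[ZMod p] V) : πe p k V (ιV p k V z) = 0 := by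
  induction z using TensorProduct.induction_on with
  | zero => simp
  | tmul c m => simp
  | add a b h1 h2 => simp [map_add, h1, h2]

@[simp] lemma πf_ι (z : k ⊗[ZMod p] V) : πf p k V (ιV p k V z) = 0 := by
  induction z using TensorProduct.induction_on with
  | zero => simp
  | tmul c m => simp
  | add a b h1 h2 => simp [map_add, h1, h2]

@[simp] lemma πV_ev : πV p k V (ev p k V) = 0 := by simp [ev]
@[simp] lemma πV_fv : πV p k V (fv p k V) = 0 := by simp [fv]
@[simp] lemma πe_ev : πe p k V (ev p k V) = 1 := by simp [ev]
@[simp] lemma πe_fv : πe p k V (fv p k V) = 0 := by simp [fv]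
@[simp] lemma πf_ev : πf p k V (ev p k V) = 0 := by simp [ev]
@[simp] lemma πf_fv : πf p k V (fv p k V) = 1 := by simp [fv]

lemma decomp (z : k ⊗[ZMod p] Vt) :
    z = ιV p k V (πV p k V z) + (πe p k V z) • (ev p k V) + (πf p k V z) • (fv p k V) := by
  induction z using TensorProduct.induction_on with
  | zero => simp
  | add a b h1 h2 =>
    simp only [map_add, add_smul]
    conv_lhs => rw [h1, h2]
    abel
  | tmul c m =>
    obtain ⟨a, s, t⟩ := m
    simp only [πV_tmul, πe_tmul, πf_tmul, ιV_tmul, ev, fv]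
    rw [smul_tmul', smul_tmul', smul_eq_mul, smul_eq_mul, mul_one, mul_one,
      smul_tmul, smul_tmul, ← tmul_add, ← tmul_add]
    congr 1
    simp [Prod.ext_iff]

end Tilde

noncomputable section Tilde2
variable (p : ℕ) [Fact p.Prime] (k : Type) [Field k] [CharP k p] [Algebra (ZMod p) k]
  [IsAlgClosed k] (V : Type) [AddCommGroup V] [Module (ZMod p) V]

local notation "Vt" => (V × ZMod p × ZMod p)

lemma frobT_ι (z : k ⊗[ZMod p] V) :
    frobT p k Vt (ιV p k V z) = ιV p k V (frobT p k V z) := by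
  induction z using TensorProduct.induction_on with
  | zero => simp
  | tmul c m => rfl
  | add a b h1 h2 => simp only [map_add, h1, h2]

@[simp] lemma frobT_ev : frobT p k Vt (ev p k V) = ev p k V := by
  show ((1:k)^p) ⊗ₜ[ZMod p] ((0,1,0) : Vt) = _ ; rw [one_pow]; rfl

@[simp] lemma frobT_fv : frobT p k Vt (fv p k V) = fv p k V := by
  show ((1:k)^p) ⊗ₜ[ZMod p] ((0,0,1) : Vt) = _ ; rw [one_pow]; rfl

lemma πV_frob (z : k ⊗[ZMod p] Vt) :
    πV p k V (frobT p k Vt z) = frobT p k V (πV p k V z) := by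
  induction z using TensorProduct.induction_on with
  | zero => simp
  | tmul c m => rfl
  | add a b h1 h2 => simp only [map_add, h1, h2]

lemma πe_frob (z : k ⊗[ZMod p] Vt) :
    πe p k V (frobT p k Vt z) = (πe p k V z)^p := by
  induction z using TensorProduct.induction_on with
  | zero => simp [zero_pow (pnz p)]
  | tmul c m =>
    show πe p k V ((c^p) ⊗ₜ m) = _
    simp only [πe_tmul]
    rw [Algebra.smul_def, Algebra.smul_def, mul_pow, ← map_pow, ZMod.pow_card]
  | add a b h1 h2 => simp only [map_add, h1, h2, add_pow_char]

lemma πf_frob (z : k ⊗[ZMod p] Vt) :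
    πf p k V (frobT p k Vt z) = (πf p k V z)^p := by
  induction z using TensorProduct.induction_on with
  | zero => simp [zero_pow (pnz p)]
  | tmul c m =>
    show πf p k V ((c^p) ⊗ₜ m) = _
    simp only [πf_tmul]
    rw [Algebra.smul_def, Algebra.smul_def, mul_pow, ← map_pow, ZMod.pow_card]
  | add a b h1 h2 => simp only [map_add, h1, h2, add_pow_char]

variable (B : LinearMap.BilinForm (ZMod p) V)

/-- master pairing formula -/
lemma Btil_pairing (z w : k ⊗[ZMod p] Vt) :
    bcForm p k Vt (Btil p V B) z w
      = bcForm p k V B (πV p k V z) (πV p k V w)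
        - πe p k V z * πf p k V w - πf p k V z * πe p k V w := by
  induction z using TensorProduct.induction_on with
  | zero => simp
  | add a b h1 h2 => simp only [map_add, LinearMap.add_apply, h1, h2]; ring
  | tmul c m =>
    induction w using TensorProduct.induction_on with
    | zero => simp
    | add a b h1 h2 => simp only [map_add, h1, h2]; ring
    | tmul d n =>
      simp only [LinearMap.BilinForm.baseChange_tmul, πV_tmul, πe_tmul, πf_tmul]
      show (Btil p V B m n) • (c * d) = _
      have : Btil p V B m n = B m.1 n.1 - m.2.1 * n.2.2 - m.2.2 * n.2.1 := rfl
      rw [this, sub_smul, sub_smul]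
      simp only [Algebra.smul_def, map_mul]
      ring

end Tilde2

noncomputable section GVec
variable (p : ℕ) [Fact p.Prime] (k : Type) [Field k] [CharP k p] [Algebra (ZMod p) k]
  [IsAlgClosed k] (V : Type) [AddCommGroup V] [Module (ZMod p) V]

local notation "Vt" => (V × ZMod p × ZMod p)

variable (σ₀ : ℕ) (B : LinearMap.BilinForm (ZMod p) V)
  (x : Fin σ₀ → k ⊗[ZMod p] V)

lemma range_snoc {n : ℕ} {α : Type} (f : Fin n → α) (a : α) :
    Set.range (Fin.snoc f a) = insert a (Set.range f) := by
  ext y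
  simp only [Set.mem_range, Set.mem_insert_iff]
  constructor
  · rintro ⟨i, rfl⟩
    rcases Fin.eq_castSucc_or_eq_last i with ⟨j, rfl⟩ | rfl
    · right; exact ⟨j, by simp⟩
    · left; simp
  · rintro (rfl | ⟨i, rfl⟩)
    · exact ⟨Fin.last n, by simp⟩
    · exact ⟨i.castSucc, by simp⟩

def gvec (Bf : k ⊗[ZMod p] V) : Fin (σ₀+1) → k ⊗[ZMod p] Vt :=
  Fin.snoc (fun i => ιV p k V (x i) + (bcForm p k V B (x i) Bf) • ev p k V)
    (fv p k V + ιV p k V Bf + (bcForm p k V B Bf Bf / 2) • ev p k V)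

lemma gvec_castSucc (Bf : k ⊗[ZMod p] V) (i : Fin σ₀) :
    gvec p k V σ₀ B x Bf i.castSucc
      = ιV p k V (x i) + (bcForm p k V B (x i) Bf) • ev p k V := by
  simp [gvec]

lemma gvec_last (Bf : k ⊗[ZMod p] V) :
    gvec p k V σ₀ B x Bf (Fin.last σ₀)
      = fv p k V + ιV p k V Bf + (bcForm p k V B Bf Bf / 2) • ev p k V := by
  simp [gvec]

lemma Ktil_eq_span (Bf : k ⊗[ZMod p] V) :
    Ktil p k V σ₀ B x Bf = Submodule.span k (Set.range (gvec p k V σ₀ B x Bf)) := by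
  rw [Ktil, Set.union_singleton, gvec, range_snoc]
  rfl

@[simp] lemma πf_gvec_castSucc (Bf : k ⊗[ZMod p] V) (i : Fin σ₀) :
    πf p k V (gvec p k V σ₀ B x Bf i.castSucc) = 0 := by
  rw [gvec_castSucc]; simp

@[simp] lemma πf_gvec_last (Bf : k ⊗[ZMod p] V) :
    πf p k V (gvec p k V σ₀ B x Bf (Fin.last σ₀)) = 1 := by
  rw [gvec_last]; simp

@[simp] lemma πV_gvec_castSucc (Bf : k ⊗[ZMod p] V) (i : Fin σ₀) :
    πV p k V (gvec p k V σ₀ B x Bf i.castSucc) = x i := by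
  rw [gvec_castSucc]; simp

@[simp] lemma πV_gvec_last (Bf : k ⊗[ZMod p] V) :
    πV p k V (gvec p k V σ₀ B x Bf (Fin.last σ₀)) = Bf := by
  rw [gvec_last]; simp

@[simp] lemma πe_gvec_castSucc (Bf : k ⊗[ZMod p] V) (i : Fin σ₀) :
    πe p k V (gvec p k V σ₀ B x Bf i.castSucc) = bcForm p k V B (x i) Bf := by
  rw [gvec_castSucc]; simp

@[simp] lemma πe_gvec_last (Bf : k ⊗[ZMod p] V) :
    πe p k V (gvec p k V σ₀ B x Bf (Fin.last σ₀)) = bcForm p k V B Bf Bf / 2 := by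
  rw [gvec_last]; simp

lemma gvec_li (hxli : LinearIndependent k x) (Bf : k ⊗[ZMod p] V) :
    LinearIndependent k (gvec p k V σ₀ B x Bf) := by
  rw [Fintype.linearIndependent_iff]
  intro c hc
  have hlast : c (Fin.last σ₀) = 0 := by
    have := congrArg (πf p k V) hc
    rw [map_sum, map_zero] at this
    simpa [Fin.sum_univ_castSucc] using this
  have hV := congrArg (πV p k V) hc
  rw [map_sum, map_zero] at hV
  rw [Fin.sum_univ_castSucc] at hV
  simp only [map_smul, πV_gvec_castSucc, πV_gvec_last, hlast, zero_smul, add_zero,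
    map_zero] at hV
  have hrest : ∀ i : Fin σ₀, c i.castSucc = 0 :=
    Fintype.linearIndependent_iff.mp hxli _ hV
  intro i
  exact Fin.lastCases hlast hrest i

lemma finrank_Ktil (hxli : LinearIndependent k x) (Bf : k ⊗[ZMod p] V) :
    Module.finrank k (Ktil p k V σ₀ B x Bf) = σ₀ + 1 := by
  rw [Ktil_eq_span, finrank_span_eq_card (gvec_li p k V σ₀ B x hxli Bf), Fintype.card_fin]

lemma mem_Ktil_iff (Bf : k ⊗[ZMod p] V) (z : k ⊗[ZMod p] Vt) :
    z ∈ Ktil p k V σ₀ B x Bf ↔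
      ∃ c : Fin (σ₀+1) → k, ∑ i, c i • gvec p k V σ₀ B x Bf i = z := by
  rw [Ktil_eq_span]
  exact Submodule.mem_span_range_iff_exists_fun k

end GVec

noncomputable section Main
variable (p : ℕ) [Fact p.Prime] (k : Type) [Field k] [CharP k p] [Algebra (ZMod p) k]
  [IsAlgClosed k] (V : Type) [AddCommGroup V] [Module (ZMod p) V]
  (σ₀ : ℕ) (B : LinearMap.BilinForm (ZMod p) V)

local notation "Vt" => (V × ZMod p × ZMod p)
local notation "Bk" => bcForm p k V B
local notation "φ" => frobT p k V

lemma twoNZ (hodd : Odd p) : (2:k) ≠ 0 := by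
  intro h
  have h2 : (p:ℕ) ∣ 2 := (CharP.cast_eq_zero_iff k p 2).mp (by exact_mod_cast h)
  have hp : p = 2 := (Nat.prime_dvd_prime_iff_eq Fact.out Nat.prime_two).mp h2
  rw [hp] at hodd
  exact (by decide : ¬ Odd 2) hodd

lemma bk_symm (hsymm : B.IsSymm) (u v : k ⊗[ZMod p] V) : Bk u v = Bk v u := by
  have h := LinearMap.BilinForm.IsSymm.baseChange k (LinearMap.BilinForm.isSymm_iff.mp hsymm) (B₂ := B)
  simpa using h.eq u v

lemma phiK_isotropic (K : Submodule k (k ⊗[ZMod p] V))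
    (hK1 : ∀ u ∈ K, ∀ v ∈ K, Bk u v = 0) :
    ∀ u ∈ Submodule.map φ K, ∀ v ∈ Submodule.map φ K, Bk u v = 0 := by
  rintro u hu v hv
  obtain ⟨u', hu', rfl⟩ := hu
  obtain ⟨v', hv', rfl⟩ := hv
  rw [bc_frob, hK1 u' hu' v' hv', zero_pow (pnz p)]

lemma keylem (hodd : Odd p) (hsymm : B.IsSymm)
    (K : Submodule k (k ⊗[ZMod p] V))
    (hK1 : ∀ u ∈ K, ∀ v ∈ K, Bk u v = 0)
    (Bf : k ⊗[ZMod p] V) (hBf : IsBField p k V K Bf)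
    (a b : k ⊗[ZMod p] V) (c : k)
    (ha : a ∈ K) (hb : b ∈ Submodule.map φ K)
    (hrel : a + b + c • (Bf - φ Bf) = 0) :
    Bk a Bf + Bk b (φ Bf) + c * ((Bk Bf Bf - Bk (φ Bf) (φ Bf))/2) = 0 := by
  set G := φ Bf with hG
  have hφiso := phiK_isotropic p k V B K hK1
  by_cases hc : c = 0
  · subst hc
    have hba : b = -a := by
      have h2 : b + a = 0 := by
        rw [← hrel]; rw [zero_smul]; abel
      exact eq_neg_of_add_eq_zero_left h2
    subst hba
    rw [mul_comm, mul_zero, add_zero]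
    have haD : Bk a (Bf - G) = 0 := by
      have hBf' : Bf - φ Bf ∈ K ⊔ Submodule.map φ K := hBf
      rw [hG]
      obtain ⟨u, hu, w, hw, huw⟩ := Submodule.mem_sup.mp hBf'
      have haφ : a ∈ Submodule.map φ K := by
        simpa using Submodule.neg_mem _ hb
      rw [← huw, map_add, hK1 a ha u hu, hφiso a haφ w hw, add_zero]
    rw [map_sub] at haD
    have : Bk (-a) G = - Bk a G := by simp
    rw [this]
    linear_combination haD
  · -- c ≠ 0
    have hb' : b = -(a + c • (Bf - G)) := by
      have h2 : b + (a + c • (Bf - G)) = 0 := by rw [← hrel]; abel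
      exact eq_neg_of_add_eq_zero_left h2
    have hbb : Bk b b = 0 := hφiso b hb b hb
    have haa : Bk a a = 0 := hK1 a ha a ha
    set P := Bk a Bf with hP
    set Q := Bk a G with hQ
    set R := Bk Bf Bf with hR
    set S := Bk Bf G with hS
    set T := Bk G G with hT
    have hsym1 : Bk Bf a = P := bk_symm p k V B hsymm Bf a
    have hsym2 : Bk G a = Q := bk_symm p k V B hsymm G a
    have hsym3 : Bk G Bf = S := bk_symm p k V B hsymm G Bf
    have hbb' : (2*c) * (P - Q) + c^2 * (R - 2*S + T) = 0 := by
      rw [hb'] at hbb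
      simp only [map_neg, map_add, map_smul, LinearMap.neg_apply, LinearMap.add_apply,
        LinearMap.smul_apply, map_sub, LinearMap.sub_apply, smul_eq_mul, neg_neg,
        haa, ← hP, ← hQ, ← hR, ← hS, ← hT, hsym1, hsym2, hsym3] at hbb
      linear_combination hbb
    have hbG : Bk b G = -Q - c * (S - T) := by
      rw [hb']
      simp only [map_neg, map_add, map_smul, LinearMap.neg_apply, LinearMap.add_apply,
        LinearMap.smul_apply, map_sub, LinearMap.sub_apply, smul_eq_mul,
        ← hQ, ← hS, ← hT, hsym3]
      ring
    rw [hbG]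
    have h2 : (2:k) ≠ 0 := twoNZ p k hodd
    have key2 : P + (-Q - c * (S - T)) + c * ((R - T)/2)
        = (2*c * (P - Q) + c^2 * (R - 2*S + T))/(2*c) := by
      field_simp
      ring
    rw [key2, hbb', zero_div]

end Main

noncomputable section Main2
variable (p : ℕ) [Fact p.Prime] (k : Type) [Field k] [CharP k p] [Algebra (ZMod p) k]
  [IsAlgClosed k] (V : Type) [AddCommGroup V] [Module (ZMod p) V]
  (σ₀ : ℕ) (B : LinearMap.BilinForm (ZMod p) V)

local notation "Vt" => (V × ZMod p × ZMod p)
local notation "Bk" => bcForm p k V B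
local notation "φ" => frobT p k V
local notation "φt" => frobT p k Vt

variable (x : Fin σ₀ → k ⊗[ZMod p] V)

lemma map_frobT_span (S : Set (k ⊗[ZMod p] V)) :
    Submodule.map φ (Submodule.span k S) = Submodule.span k (φ '' S) :=
  Submodule.map_span _ S

lemma map_frobT_spant (S : Set (k ⊗[ZMod p] Vt)) :
    Submodule.map φt (Submodule.span k S) = Submodule.span k (φt '' S) :=
  Submodule.map_span _ S

lemma map_frobT_Ktil (Bf : k ⊗[ZMod p] V) :
    Submodule.map φt (Ktil p k V σ₀ B x Bf)
      = Submodule.span k (Set.range (fun i => φt (gvec p k V σ₀ B x Bf i))) := by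
  rw [Ktil_eq_span, map_frobT_spant, ← Set.range_comp]
  rfl

lemma mem_MKtil_iff (Bf : k ⊗[ZMod p] V) (z : k ⊗[ZMod p] Vt) :
    z ∈ Ktil p k V σ₀ B x Bf ⊔ Submodule.map φt (Ktil p k V σ₀ B x Bf)
      ↔ ∃ c d : Fin (σ₀+1) → k,
        z = ∑ i, c i • gvec p k V σ₀ B x Bf i + ∑ i, d i • φt (gvec p k V σ₀ B x Bf i) := by
  rw [Submodule.mem_sup]
  constructor
  · rintro ⟨u, hu, w, hw, rfl⟩
    rw [mem_Ktil_iff] at hu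
    obtain ⟨c, rfl⟩ := hu
    rw [map_frobT_Ktil, Submodule.mem_span_range_iff_exists_fun] at hw
    obtain ⟨d, rfl⟩ := hw
    exact ⟨c, d, rfl⟩
  · rintro ⟨c, d, rfl⟩
    refine ⟨_, ?_, _, ?_, rfl⟩
    · rw [mem_Ktil_iff]; exact ⟨c, rfl⟩
    · rw [map_frobT_Ktil]
      rw [Submodule.mem_span_range_iff_exists_fun]
      exact ⟨d, rfl⟩

@[simp] lemma πf_φt_gvec_castSucc (Bf : k ⊗[ZMod p] V) (i : Fin σ₀) :
    πf p k V (φt (gvec p k V σ₀ B x Bf i.castSucc)) = 0 := by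
  rw [πf_frob, πf_gvec_castSucc, zero_pow (pnz p)]

@[simp] lemma πf_φt_gvec_last (Bf : k ⊗[ZMod p] V) :
    πf p k V (φt (gvec p k V σ₀ B x Bf (Fin.last σ₀))) = 1 := by
  rw [πf_frob, πf_gvec_last, one_pow]

@[simp] lemma πV_φt_gvec_castSucc (Bf : k ⊗[ZMod p] V) (i : Fin σ₀) :
    πV p k V (φt (gvec p k V σ₀ B x Bf i.castSucc)) = φ (x i) := by
  rw [πV_frob, πV_gvec_castSucc]

@[simp] lemma πV_φt_gvec_last (Bf : k ⊗[ZMod p] V) :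
    πV p k V (φt (gvec p k V σ₀ B x Bf (Fin.last σ₀))) = φ Bf := by
  rw [πV_frob, πV_gvec_last]

@[simp] lemma πe_φt_gvec_castSucc (Bf : k ⊗[ZMod p] V) (i : Fin σ₀) :
    πe p k V (φt (gvec p k V σ₀ B x Bf i.castSucc)) = Bk (φ (x i)) (φ Bf) := by
  rw [πe_frob, πe_gvec_castSucc, bc_frob]

lemma two_pow_p : ((2:k))^p = 2 := by
  have : (2:k) = algebraMap (ZMod p) k 2 := by
    rw [map_ofNat]
  rw [this, ← map_pow, ZMod.pow_card]

@[simp] lemma πe_φt_gvec_last (Bf : k ⊗[ZMod p] V) :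
    πe p k V (φt (gvec p k V σ₀ B x Bf (Fin.last σ₀)))
      = Bk (φ Bf) (φ Bf) / 2 := by
  rw [πe_frob, πe_gvec_last, div_pow, bc_frob, two_pow_p]

/-- The crux: an element of `K̃ + φK̃` killed by `πf` and `πV` is zero. -/
lemma M_ker_eq_bot (hodd : Odd p) (hsymm : B.IsSymm)
    (K : Submodule k (k ⊗[ZMod p] V))
    (hK1 : ∀ u ∈ K, ∀ v ∈ K, Bk u v = 0)
    (hxspan : Submodule.span k (Set.range x) = K)
    (Bf : k ⊗[ZMod p] V) (hBf : IsBField p k V K Bf)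
    (z : k ⊗[ZMod p] Vt)
    (hz : z ∈ Ktil p k V σ₀ B x Bf ⊔ Submodule.map φt (Ktil p k V σ₀ B x Bf))
    (hzf : πf p k V z = 0) (hzV : πV p k V z = 0) : z = 0 := by
  obtain ⟨c, d, rfl⟩ := (mem_MKtil_iff p k V σ₀ B x Bf z).mp hz
  -- f-coordinate
  have hf : c (Fin.last σ₀) + d (Fin.last σ₀) = 0 := by
    have := hzf
    rw [map_add, map_sum, map_sum] at this
    simpa [Fin.sum_univ_castSucc] using this
  -- V-coordinate
  set a : k ⊗[ZMod p] V := ∑ i : Fin σ₀, c i.castSucc • x i with hadef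
  set b : k ⊗[ZMod p] V := ∑ i : Fin σ₀, d i.castSucc • φ (x i) with hbdef
  have ha : a ∈ K := by
    rw [← hxspan, hadef]
    exact Submodule.sum_mem _ fun i _ =>
      Submodule.smul_mem _ _ (Submodule.subset_span ⟨i, rfl⟩)
  have hb : b ∈ Submodule.map φ K := by
    rw [hbdef]
    exact Submodule.sum_mem _ fun i _ => Submodule.smul_mem _ _
      ⟨x i, by rw [← hxspan]; exact Submodule.subset_span ⟨i, rfl⟩, rfl⟩
  have hdl : d (Fin.last σ₀) = - c (Fin.last σ₀) := by linear_combination hf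
  have hV : a + b + c (Fin.last σ₀) • (Bf - φ Bf) = 0 := by
    have := hzV
    rw [map_add, map_sum, map_sum] at this
    rw [Fin.sum_univ_castSucc, Fin.sum_univ_castSucc] at this
    simp only [map_smul, πV_gvec_castSucc, πV_gvec_last, πV_φt_gvec_castSucc,
      πV_φt_gvec_last, hdl] at this
    rw [hadef, hbdef, smul_sub]
    rw [← this]
    module
  have hkey := keylem p k V B hodd hsymm K hK1 Bf hBf a b (c (Fin.last σ₀)) ha hb hV
  -- e-coordinate
  have he : πe p k V (∑ i, c i • gvec p k V σ₀ B x Bf i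
      + ∑ i, d i • φt (gvec p k V σ₀ B x Bf i)) = 0 := by
    rw [map_add, map_sum, map_sum, Fin.sum_univ_castSucc, Fin.sum_univ_castSucc]
    simp only [map_smul, πe_gvec_castSucc, πe_gvec_last, πe_φt_gvec_castSucc,
      πe_φt_gvec_last, hdl, smul_eq_mul]
    have ea : Bk a Bf = ∑ i : Fin σ₀, c i.castSucc * Bk (x i) Bf := by
      rw [hadef, map_sum]
      simp [LinearMap.sum_apply]
    have eb : Bk b (φ Bf) = ∑ i : Fin σ₀, d i.castSucc * Bk (φ (x i)) (φ Bf) := by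
      rw [hbdef, map_sum]
      simp [LinearMap.sum_apply]
    rw [ea, eb] at hkey
    linear_combination hkey
  have hd := decomp p k V (∑ i, c i • gvec p k V σ₀ B x Bf i
      + ∑ i, d i • φt (gvec p k V σ₀ B x Bf i))
  rw [hzV, hzf, he, map_zero, zero_smul, zero_smul] at hd
  simpa using hd

end Main2

noncomputable section Main3
variable (p : ℕ) [Fact p.Prime] (k : Type) [Field k] [CharP k p] [Algebra (ZMod p) k]
  [IsAlgClosed k] (V : Type) [AddCommGroup V] [Module (ZMod p) V]
  (σ₀ : ℕ) (B : LinearMap.BilinForm (ZMod p) V)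

local notation "Vt" => (V × ZMod p × ZMod p)
local notation "Bk" => bcForm p k V B
local notation "φ" => frobT p k V
local notation "φt" => frobT p k Vt

lemma ιV_mem_baseChange_Wzero (u : k ⊗[ZMod p] V) :
    ιV p k V u ∈ Submodule.baseChange k (Wzero p V) := by
  induction u using TensorProduct.induction_on with
  | zero => simp
  | add a b h1 h2 => rw [map_add]; exact Submodule.add_mem _ h1 h2
  | tmul c m =>
    rw [ιV_tmul]
    exact Submodule.tmul_mem_baseChange_of_mem c (by simp [Wzero])

lemma ev_mem_baseChange_Wzero :
    ev p k V ∈ Submodule.baseChange k (Wzero p V) :=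
  Submodule.tmul_mem_baseChange_of_mem 1 (by simp [Wzero])

lemma baseChange_Wzero_eq :
    Submodule.baseChange k (Wzero p V) = LinearMap.ker (πf p k V) := by
  apply le_antisymm
  · rw [Submodule.baseChange_eq_span, Submodule.span_le]
    rintro z ⟨m, hm, rfl⟩
    have hm2 : (m : Vt).2.2 = 0 := by
      have := hm
      simp only [Wzero, Submodule.mem_prod, Submodule.mem_top, Submodule.mem_bot,
        SetLike.mem_coe, true_and] at this
      exact this
    simp [LinearMap.mem_ker, hm2]
  · intro z hz
    rw [LinearMap.mem_ker] at hz
    have hd := decomp p k V z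
    rw [hz, zero_smul, add_zero] at hd
    rw [hd]
    exact Submodule.add_mem _ (ιV_mem_baseChange_Wzero p k V _)
      (Submodule.smul_mem _ _ (ev_mem_baseChange_Wzero p k V))

variable (x : Fin σ₀ → k ⊗[ZMod p] V)

lemma πf_Ktil_rep (Bf : k ⊗[ZMod p] V) (c : Fin (σ₀+1) → k) :
    πf p k V (∑ i, c i • gvec p k V σ₀ B x Bf i) = c (Fin.last σ₀) := by
  rw [map_sum, Fin.sum_univ_castSucc]
  simp

lemma πV_Ktil_rep (Bf : k ⊗[ZMod p] V) (c : Fin (σ₀+1) → k) :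
    πV p k V (∑ i, c i • gvec p k V σ₀ B x Bf i)
      = (∑ i : Fin σ₀, c i.castSucc • x i) + c (Fin.last σ₀) • Bf := by
  rw [map_sum, Fin.sum_univ_castSucc]
  simp

lemma ev_not_mem_Ktil (hxli : LinearIndependent k x) (Bf : k ⊗[ZMod p] V) :
    ev p k V ∉ Ktil p k V σ₀ B x Bf := by
  intro h
  obtain ⟨c, hc⟩ := (mem_Ktil_iff p k V σ₀ B x Bf _).mp h
  have h1 : c (Fin.last σ₀) = 0 := by
    have := congrArg (πf p k V) hc
    rwa [πf_Ktil_rep, πf_ev] at this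
  have h2 : ∑ i : Fin σ₀, c i.castSucc • x i = 0 := by
    have := congrArg (πV p k V) hc
    rwa [πV_Ktil_rep, h1, zero_smul, add_zero, πV_ev] at this
  have h3 : ∀ i : Fin σ₀, c (Fin.castSucc i) = 0 :=
    Fintype.linearIndependent_iff.mp hxli _ h2
  have h4 : ev p k V = 0 := by
    rw [← hc, Fin.sum_univ_castSucc]
    simp [h1, h3]
  have h5 := congrArg (πe p k V) h4
  rw [πe_ev, map_zero] at h5
  exact one_ne_zero h5

lemma cutout_Ktil (K : Submodule k (k ⊗[ZMod p] V))
    (hxspan : Submodule.span k (Set.range x) = K) (Bf : k ⊗[ZMod p] V) :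
    Submodule.map (πV p k V)
      (Ktil p k V σ₀ B x Bf ⊓ Submodule.baseChange k (Wzero p V)) = K := by
  rw [baseChange_Wzero_eq]
  apply le_antisymm
  · rintro _ ⟨z, hz, rfl⟩
    obtain ⟨hz1, hz2⟩ := Submodule.mem_inf.mp hz
    rw [LinearMap.mem_ker] at hz2
    obtain ⟨c, rfl⟩ := (mem_Ktil_iff p k V σ₀ B x Bf _).mp hz1
    rw [πf_Ktil_rep] at hz2
    rw [πV_Ktil_rep, hz2, zero_smul, add_zero, ← hxspan]
    exact Submodule.sum_mem _ fun i _ =>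
      Submodule.smul_mem _ _ (Submodule.subset_span ⟨i, rfl⟩)
  · intro u hu
    rw [← hxspan, Submodule.mem_span_range_iff_exists_fun] at hu
    obtain ⟨c, rfl⟩ := hu
    refine ⟨∑ i : Fin σ₀, c i • gvec p k V σ₀ B x Bf i.castSucc,
      Submodule.mem_inf.mpr ⟨?_, ?_⟩, ?_⟩
    · rw [mem_Ktil_iff]
      refine ⟨Fin.snoc c 0, ?_⟩
      rw [Fin.sum_univ_castSucc]
      simp
    · rw [LinearMap.mem_ker, map_sum]
      simp
    · rw [map_sum]
      simp

end Main3

noncomputable section Main4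
variable (p : ℕ) [Fact p.Prime] (k : Type) [Field k] [CharP k p] [Algebra (ZMod p) k]
  [IsAlgClosed k] (V : Type) [AddCommGroup V] [Module (ZMod p) V]
  (σ₀ : ℕ) (B : LinearMap.BilinForm (ZMod p) V)

local notation "Vt" => (V × ZMod p × ZMod p)
local notation "Bk" => bcForm p k V B
local notation "φ" => frobT p k V
local notation "φt" => frobT p k Vt

variable (x : Fin σ₀ → k ⊗[ZMod p] V)

lemma Ktil_isotropic (hodd : Odd p) (hsymm : B.IsSymm)
    (K : Submodule k (k ⊗[ZMod p] V))
    (hK1 : ∀ u ∈ K, ∀ v ∈ K, Bk u v = 0)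
    (hxspan : Submodule.span k (Set.range x) = K)
    (Bf : k ⊗[ZMod p] V) :
    ∀ z ∈ Ktil p k V σ₀ B x Bf, ∀ w ∈ Ktil p k V σ₀ B x Bf,
      bcForm p k Vt (Btil p V B) z w = 0 := by
  rw [Ktil_eq_span]
  apply isotropic_span
  rintro _ ⟨i, rfl⟩ _ ⟨j, rfl⟩
  have hxK : ∀ i : Fin σ₀, x i ∈ K := fun i => by
    rw [← hxspan]; exact Submodule.subset_span ⟨i, rfl⟩
  have h2 : (2:k) ≠ 0 := twoNZ p k hodd
  induction i using Fin.lastCases with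
  | cast i =>
    induction j using Fin.lastCases with
    | cast j =>
      rw [Btil_pairing]
      simp [hK1 (x i) (hxK i) (x j) (hxK j)]
    | last =>
      rw [Btil_pairing]
      simp
  | last =>
    induction j using Fin.lastCases with
    | cast j =>
      rw [Btil_pairing]
      simp only [πV_gvec_castSucc, πV_gvec_last, πe_gvec_castSucc, πe_gvec_last,
        πf_gvec_castSucc, πf_gvec_last]
      rw [bk_symm p k V B hsymm Bf (x j)]
      ring
    | last =>
      rw [Btil_pairing]
      simp only [πV_gvec_last, πe_gvec_last, πf_gvec_last]
      field_simp
      ring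

lemma πf_M_rep (Bf : k ⊗[ZMod p] V) (c d : Fin (σ₀+1) → k) :
    πf p k V (∑ i, c i • gvec p k V σ₀ B x Bf i + ∑ i, d i • φt (gvec p k V σ₀ B x Bf i))
      = c (Fin.last σ₀) + d (Fin.last σ₀) := by
  rw [map_add, map_sum, map_sum, Fin.sum_univ_castSucc, Fin.sum_univ_castSucc]
  simp

lemma gvec_mem_Ktil (Bf : k ⊗[ZMod p] V) (i : Fin (σ₀+1)) :
    gvec p k V σ₀ B x Bf i ∈ Ktil p k V σ₀ B x Bf := by
  rw [Ktil_eq_span]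
  exact Submodule.subset_span ⟨i, rfl⟩

lemma comb_mem_Ktil (Bf : k ⊗[ZMod p] V) (c : Fin σ₀ → k) :
    ∑ i : Fin σ₀, c i • gvec p k V σ₀ B x Bf i.castSucc ∈ Ktil p k V σ₀ B x Bf :=
  Submodule.sum_mem _ fun i _ =>
    Submodule.smul_mem _ _ (gvec_mem_Ktil p k V σ₀ B x Bf i.castSucc)

lemma finrank_MKtil [FiniteDimensional k (k ⊗[ZMod p] Vt)]
    (hodd : Odd p) (hsymm : B.IsSymm)
    (K : Submodule k (k ⊗[ZMod p] V))
    (hK1 : ∀ u ∈ K, ∀ v ∈ K, Bk u v = 0)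
    (hKdim : Module.finrank k ↥(K ⊔ Submodule.map φ K) = σ₀ + 1)
    (hxspan : Submodule.span k (Set.range x) = K)
    (Bf : k ⊗[ZMod p] V) (hBf : IsBField p k V K Bf) :
    Module.finrank k
      ↥(Ktil p k V σ₀ B x Bf ⊔ Submodule.map φt (Ktil p k V σ₀ B x Bf)) = σ₀ + 2 := by
  set KT := Ktil p k V σ₀ B x Bf with hKT
  set M := KT ⊔ Submodule.map φt KT with hM
  have h1 := finrank_eq_map_add_inf_ker M (πf p k V)
  have htop : Submodule.map (πf p k V) M = ⊤ := by
    have h1mem : (1:k) ∈ Submodule.map (πf p k V) M :=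
      ⟨gvec p k V σ₀ B x Bf (Fin.last σ₀),
        Submodule.mem_sup_left (gvec_mem_Ktil p k V σ₀ B x Bf _),
        by simp⟩
    refine Submodule.eq_top_iff'.mpr fun y => ?_
    simpa using Submodule.smul_mem _ y h1mem
  have h2 := finrank_eq_map_add_inf_ker (M ⊓ LinearMap.ker (πf p k V)) (πV p k V)
  have hbot : (M ⊓ LinearMap.ker (πf p k V)) ⊓ LinearMap.ker (πV p k V) = ⊥ := by
    rw [eq_bot_iff]
    intro z hz
    obtain ⟨⟨hz1, hz2⟩, hz3⟩ := hz
    rw [Submodule.mem_bot]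
    exact M_ker_eq_bot p k V σ₀ B x hodd hsymm K hK1 hxspan Bf hBf z hz1 hz2 hz3
  have hmap : Submodule.map (πV p k V) (M ⊓ LinearMap.ker (πf p k V))
      = K ⊔ Submodule.map φ K := by
    apply le_antisymm
    · rintro _ ⟨z, hz, rfl⟩
      obtain ⟨hz1, hz2⟩ := Submodule.mem_inf.mp hz
      rw [LinearMap.mem_ker] at hz2
      obtain ⟨c, d, rfl⟩ := (mem_MKtil_iff p k V σ₀ B x Bf z).mp hz1
      rw [πf_M_rep] at hz2
      have hdl : d (Fin.last σ₀) = - c (Fin.last σ₀) := by linear_combination hz2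
      have hπV : πV p k V (∑ i, c i • gvec p k V σ₀ B x Bf i
            + ∑ i, d i • φt (gvec p k V σ₀ B x Bf i))
          = (∑ i : Fin σ₀, c i.castSucc • x i) + (∑ i : Fin σ₀, d i.castSucc • φ (x i))
            + c (Fin.last σ₀) • (Bf - φ Bf) := by
        rw [map_add, map_sum, map_sum, Fin.sum_univ_castSucc, Fin.sum_univ_castSucc]
        simp only [map_smul, πV_gvec_castSucc, πV_gvec_last, πV_φt_gvec_castSucc,
          πV_φt_gvec_last, hdl, smul_sub]
        module
      rw [hπV]
      refine Submodule.add_mem _ (Submodule.add_mem _ ?_ ?_) ?_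
      · exact Submodule.mem_sup_left (by
          rw [← hxspan]
          exact Submodule.sum_mem _ fun i _ =>
            Submodule.smul_mem _ _ (Submodule.subset_span ⟨i, rfl⟩))
      · exact Submodule.mem_sup_right (Submodule.sum_mem _ fun i _ =>
          Submodule.smul_mem _ _
            ⟨x i, by rw [← hxspan]; exact Submodule.subset_span ⟨i, rfl⟩, rfl⟩)
      · exact Submodule.smul_mem _ _ hBf
    · apply sup_le
      · intro u hu
        rw [← hxspan, Submodule.mem_span_range_iff_exists_fun] at hu
        obtain ⟨c, rfl⟩ := hu
        refine ⟨∑ i : Fin σ₀, c i • gvec p k V σ₀ B x Bf i.castSucc,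
          Submodule.mem_inf.mpr ⟨Submodule.mem_sup_left (comb_mem_Ktil p k V σ₀ B x Bf c), ?_⟩, ?_⟩
        · rw [LinearMap.mem_ker, map_sum]; simp
        · rw [map_sum]; simp
      · rintro _ ⟨u, hu, rfl⟩
        simp only [SetLike.mem_coe] at hu
        rw [← hxspan, Submodule.mem_span_range_iff_exists_fun] at hu
        obtain ⟨c, rfl⟩ := hu
        refine ⟨φt (∑ i : Fin σ₀, c i • gvec p k V σ₀ B x Bf i.castSucc),
          Submodule.mem_inf.mpr ⟨Submodule.mem_sup_right
            ⟨_, comb_mem_Ktil p k V σ₀ B x Bf c, rfl⟩, ?_⟩, ?_⟩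
        · rw [LinearMap.mem_ker, πf_frob, map_sum]
          simp [zero_pow (pnz p)]
        · rw [πV_frob, map_sum, map_sum]
          simp
  rw [htop] at h1
  rw [hmap, hbot] at h2
  rw [h1, h2, hKdim, finrank_bot, finrank_top, Module.finrank_self]
  omega

end Main4

noncomputable section Main5
variable (p : ℕ) [Fact p.Prime] (k : Type) [Field k] [CharP k p] [Algebra (ZMod p) k]
  [IsAlgClosed k] (V : Type) [AddCommGroup V] [Module (ZMod p) V]
  (σ₀ : ℕ) (B : LinearMap.BilinForm (ZMod p) V)

local notation "Vt" => (V × ZMod p × ZMod p)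
local notation "Bk" => bcForm p k V B
local notation "φ" => frobT p k V
local notation "φt" => frobT p k Vt

lemma ext3 (z w : k ⊗[ZMod p] Vt) (h1 : πV p k V z = πV p k V w)
    (h2 : πe p k V z = πe p k V w) (h3 : πf p k V z = πf p k V w) : z = w := by
  rw [decomp p k V z, decomp p k V w, h1, h2, h3]

variable (x : Fin σ₀ → k ⊗[ZMod p] V)

lemma Ktil_le_of_diff_mem (hodd : Odd p) (hsymm : B.IsSymm)
    (K : Submodule k (k ⊗[ZMod p] V))
    (hK1 : ∀ u ∈ K, ∀ v ∈ K, Bk u v = 0)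
    (hxspan : Submodule.span k (Set.range x) = K)
    (B₁ B₂ : k ⊗[ZMod p] V) (hd : B₁ - B₂ ∈ K) :
    Ktil p k V σ₀ B x B₁ ≤ Ktil p k V σ₀ B x B₂ := by
  have hxK : ∀ i : Fin σ₀, x i ∈ K := fun i => by
    rw [← hxspan]; exact Submodule.subset_span ⟨i, rfl⟩
  have h2 : (2:k) ≠ 0 := twoNZ p k hodd
  rw [Ktil_eq_span p k V σ₀ B x B₁, Submodule.span_le]
  rintro _ ⟨i, rfl⟩
  induction i using Fin.lastCases with
  | cast i =>
    have heq : Bk (x i) B₁ = Bk (x i) B₂ := by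
      have h0 := hK1 (x i) (hxK i) (B₁ - B₂) hd
      rw [map_sub] at h0
      linear_combination h0
    rw [SetLike.mem_coe, gvec_castSucc, heq, ← gvec_castSucc p k V σ₀ B x B₂]
    exact gvec_mem_Ktil p k V σ₀ B x B₂ i.castSucc
  | last =>
    obtain ⟨c, hc⟩ : ∃ c : Fin σ₀ → k, ∑ i, c i • x i = B₁ - B₂ := by
      rw [← Submodule.mem_span_range_iff_exists_fun, hxspan]; exact hd
    have hκκ : Bk (B₁ - B₂) (B₁ - B₂) = 0 := hK1 _ hd _ hd
    have key : gvec p k V σ₀ B x B₁ (Fin.last σ₀)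
        = gvec p k V σ₀ B x B₂ (Fin.last σ₀)
          + ∑ i : Fin σ₀, c i • gvec p k V σ₀ B x B₂ i.castSucc := by
      apply ext3
      · rw [map_add, map_sum, πV_gvec_last, πV_gvec_last]
        simp only [map_smul, πV_gvec_castSucc]
        rw [hc]
        module
      · rw [map_add, map_sum, πe_gvec_last, πe_gvec_last]
        simp only [map_smul, πe_gvec_castSucc, smul_eq_mul]
        have hsum : ∑ i : Fin σ₀, c i * Bk (x i) B₂ = Bk (B₁ - B₂) B₂ := by
          rw [← hc, map_sum, LinearMap.sum_apply]
          simp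
        rw [hsum]
        have hexp : Bk B₁ B₁ = Bk B₂ B₂ + 2 * Bk (B₁ - B₂) B₂ := by
          have hsy := bk_symm p k V B hsymm B₁ B₂
          have hκκ' := hκκ
          simp only [map_sub, map_add, LinearMap.sub_apply, LinearMap.add_apply] at hκκ'
          simp only [map_sub, map_add, LinearMap.sub_apply, LinearMap.add_apply]
          linear_combination hκκ' - hsy
        have hX : Bk (B₁ - B₂) B₂ = Bk B₁ B₂ - Bk B₂ B₂ := by
          simp only [map_sub, LinearMap.sub_apply]
        field_simp
        linear_combination hexp
      · rw [map_add, map_sum, πf_gvec_last, πf_gvec_last]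
        simp
    rw [SetLike.mem_coe, key]
    exact Submodule.add_mem _ (gvec_mem_Ktil p k V σ₀ B x B₂ _)
      (comb_mem_Ktil p k V σ₀ B x B₂ c)

lemma Ktil_eq_iff (hodd : Odd p) (hsymm : B.IsSymm)
    (K : Submodule k (k ⊗[ZMod p] V))
    (hK1 : ∀ u ∈ K, ∀ v ∈ K, Bk u v = 0)
    (hxspan : Submodule.span k (Set.range x) = K)
    (B₁ B₂ : k ⊗[ZMod p] V) :
    Ktil p k V σ₀ B x B₁ = Ktil p k V σ₀ B x B₂ ↔ B₁ - B₂ ∈ K := by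
  constructor
  · intro h
    have hmem : gvec p k V σ₀ B x B₂ (Fin.last σ₀) ∈ Ktil p k V σ₀ B x B₁ := by
      rw [h]; exact gvec_mem_Ktil p k V σ₀ B x B₂ _
    obtain ⟨c, hc⟩ := (mem_Ktil_iff p k V σ₀ B x B₁ _).mp hmem
    have h1 : c (Fin.last σ₀) = 1 := by
      have := congrArg (πf p k V) hc
      rwa [πf_Ktil_rep, πf_gvec_last] at this
    have h2 : (∑ i : Fin σ₀, c i.castSucc • x i) + c (Fin.last σ₀) • B₁ = B₂ := by
      have := congrArg (πV p k V) hc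
      rwa [πV_Ktil_rep, πV_gvec_last] at this
    have h3 : B₁ - B₂ = - ∑ i : Fin σ₀, c i.castSucc • x i := by
      rw [← h2, h1, one_smul]
      abel
    rw [h3]
    exact Submodule.neg_mem _ (Submodule.sum_mem _ fun i _ => Submodule.smul_mem _ _
      (by rw [← hxspan]; exact Submodule.subset_span ⟨i, rfl⟩))
  · intro hd
    exact le_antisymm
      (Ktil_le_of_diff_mem p k V σ₀ B x hodd hsymm K hK1 hxspan B₁ B₂ hd)
      (Ktil_le_of_diff_mem p k V σ₀ B x hodd hsymm K hK1 hxspan B₂ B₁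
        (by simpa using Submodule.neg_mem _ hd))

end Main5

noncomputable section Main6
variable (p : ℕ) [Fact p.Prime] (k : Type) [Field k] [CharP k p] [Algebra (ZMod p) k]
  [IsAlgClosed k] (V : Type) [AddCommGroup V] [Module (ZMod p) V]
  (σ₀ : ℕ) (B : LinearMap.BilinForm (ZMod p) V)

local notation "Vt" => (V × ZMod p × ZMod p)
local notation "Bk" => bcForm p k V B
local notation "φ" => frobT p k V
local notation "φt" => frobT p k Vt

variable (x : Fin σ₀ → k ⊗[ZMod p] V)

lemma part3 [FiniteDimensional k (k ⊗[ZMod p] Vt)] [FiniteDimensional k (k ⊗[ZMod p] V)]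
    (hodd : Odd p) (hsymm : B.IsSymm)
    (K : Submodule k (k ⊗[ZMod p] V))
    (hK : IsCharacteristicSub p k V σ₀ B K)
    (hxspan : Submodule.span k (Set.range x) = K)
    (hxli : LinearIndependent k x)
    (L : Submodule k (k ⊗[ZMod p] Vt))
    (hL : IsGoodExtension p k V σ₀ B K L) :
    ∃ Bf : k ⊗[ZMod p] V, IsBField p k V K Bf ∧ L = Ktil p k V σ₀ B x Bf := by
  obtain ⟨⟨hLiso, hLrank, hLsup⟩, hev, hcut⟩ := hL
  have h2 : (2:k) ≠ 0 := twoNZ p k hodd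
  have hev' : ev p k V ∉ L := hev
  have hcut' : Submodule.map (πV p k V) (L ⊓ LinearMap.ker (πf p k V)) = K := by
    rw [← baseChange_Wzero_eq]
    exact hcut
  -- injectivity lemma
  have J : ∀ z ∈ L, πf p k V z = 0 → πV p k V z = 0 → z = 0 := by
    intro z hz h1 h0
    have hd := decomp p k V z
    rw [h1, h0, map_zero, zero_add, zero_smul, add_zero] at hd
    by_cases hpe : πe p k V z = 0
    · rw [hpe, zero_smul] at hd; exact hd
    · exfalso
      obtain ⟨c, hc⟩ : ∃ c : k, c = πe p k V z := ⟨_, rfl⟩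
      rw [← hc] at hd hpe
      have hmem := Submodule.smul_mem L c⁻¹ hz
      rw [hd, smul_smul, inv_mul_cancel₀ hpe, one_smul] at hmem
      exact hev' hmem
  -- existence of h with πf h = 1
  have hex : ∃ h0, h0 ∈ L ∧ πf p k V h0 = 1 := by
    by_contra hno
    push_neg at hno
    have hallf : ∀ z ∈ L, πf p k V z = 0 := by
      intro z hz
      by_contra hzf
      exact (hno ((πf p k V z)⁻¹ • z) (Submodule.smul_mem _ _ hz))
        (by rw [map_smul, smul_eq_mul, inv_mul_cancel₀ hzf])
    have hLK : L ⊓ LinearMap.ker (πf p k V) = L := by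
      rw [inf_eq_left]
      intro z hz
      exact LinearMap.mem_ker.mpr (hallf z hz)
    have hrk := finrank_eq_map_add_inf_ker L (πV p k V)
    have hLkerV : L ⊓ LinearMap.ker (πV p k V) = ⊥ := by
      rw [eq_bot_iff]
      intro z hz
      obtain ⟨hz1, hz2⟩ := Submodule.mem_inf.mp hz
      exact (Submodule.mem_bot k).mpr (J z hz1 (hallf z hz1) hz2)
    have hmapV : Submodule.map (πV p k V) L = K := by
      rw [← hcut', hLK]
    rw [hLrank, hmapV, hLkerV, hK.2.1, finrank_bot] at hrk
    omega
  obtain ⟨h0, hh0L, hh0f⟩ := hex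
  set C := πV p k V h0 with hC
  set μ := πe p k V h0 with hμ
  -- h0 pairing with itself
  have hCC : Bk C C = 2 * μ := by
    have := hLiso h0 hh0L h0 hh0L
    rw [Btil_pairing, ← hC, ← hμ, hh0f] at this
    linear_combination this
  have hh0 : h0 = gvec p k V σ₀ B x C (Fin.last σ₀) := by
    apply ext3
    · rw [πV_gvec_last, ← hC]
    · rw [πe_gvec_last, ← hμ, hCC]
      field_simp
    · rw [πf_gvec_last, hh0f]
  -- the y i
  have hy : ∀ i : Fin σ₀, ∃ yi, yi ∈ L ⊓ LinearMap.ker (πf p k V) ∧ πV p k V yi = x i := by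
    intro i
    have hxK : x i ∈ K := by rw [← hxspan]; exact Submodule.subset_span ⟨i, rfl⟩
    rw [← hcut'] at hxK
    obtain ⟨yi, hyi, hyV⟩ := hxK
    exact ⟨yi, hyi, hyV⟩
  choose y hyL hyV using hy
  have hyL1 : ∀ i, y i ∈ L := fun i => (Submodule.mem_inf.mp (hyL i)).1
  have hyf : ∀ i, πf p k V (y i) = 0 := fun i =>
    LinearMap.mem_ker.mp (Submodule.mem_inf.mp (hyL i)).2
  have hyg : ∀ i, y i = gvec p k V σ₀ B x C (Fin.castSucc i) := by
    intro i
    have hpair := hLiso (y i) (hyL1 i) h0 hh0L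
    rw [Btil_pairing, ← hC, ← hμ, hh0f, hyV, hyf] at hpair
    have hlam : πe p k V (y i) = Bk (x i) C := by linear_combination (-1 : k) * hpair
    apply ext3
    · rw [πV_gvec_castSucc, hyV]
    · rw [πe_gvec_castSucc, hlam]
    · rw [πf_gvec_castSucc, hyf]
  -- Ktil C ≤ L
  have hle : Ktil p k V σ₀ B x C ≤ L := by
    rw [Ktil_eq_span, Submodule.span_le]
    rintro _ ⟨i, rfl⟩
    induction i using Fin.lastCases with
    | last => rw [SetLike.mem_coe, ← hh0]; exact hh0L
    | cast i => rw [SetLike.mem_coe, ← hyg]; exact hyL1 i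
  -- IsBField C
  have hCfield : IsBField p k V K C := by
    by_contra hnot
    set M := L ⊔ Submodule.map φt L with hM
    set N := M ⊓ LinearMap.ker (πf p k V) with hN
    have hfM : Module.finrank k ↥M = σ₀ + 2 := hLsup
    have htop : Submodule.map (πf p k V) M = ⊤ := by
      have h1mem : (1:k) ∈ Submodule.map (πf p k V) M :=
        ⟨h0, Submodule.mem_sup_left hh0L, hh0f⟩
      refine Submodule.eq_top_iff'.mpr fun c => ?_
      simpa using Submodule.smul_mem _ c h1mem
    have hrk := finrank_eq_map_add_inf_ker M (πf p k V)
    rw [htop, hfM, finrank_top, Module.finrank_self] at hrk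
    have hfN : Module.finrank k ↥N = σ₀ + 1 := by rw [hN]; omega
    -- lower bound on N
    set T := K ⊔ Submodule.map φ K with hT
    set D := C - φ C with hD
    have hTD : T ⊔ Submodule.span k {D} ≤ Submodule.map (πV p k V) N := by
      apply sup_le
      · apply sup_le
        · rw [← hcut']
          apply Submodule.map_mono
          exact inf_le_inf_right _ le_sup_left
        · rintro _ ⟨u, hu, rfl⟩
          simp only [SetLike.mem_coe] at hu
          rw [← hcut'] at hu
          obtain ⟨z, hz, rfl⟩ := hu
          obtain ⟨hz1, hz2⟩ := Submodule.mem_inf.mp hz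
          rw [LinearMap.mem_ker] at hz2
          refine ⟨φt z, Submodule.mem_inf.mpr ⟨Submodule.mem_sup_right ⟨z, hz1, rfl⟩, ?_⟩, ?_⟩
          · rw [LinearMap.mem_ker, πf_frob, hz2, zero_pow (pnz p)]
          · rw [πV_frob]
      · rw [Submodule.span_singleton_le_iff_mem]
        refine ⟨h0 - φt h0, Submodule.mem_inf.mpr ⟨?_, ?_⟩, ?_⟩
        · exact Submodule.sub_mem _ (Submodule.mem_sup_left hh0L)
            (Submodule.mem_sup_right ⟨h0, hh0L, rfl⟩)
        · rw [LinearMap.mem_ker, map_sub, πf_frob, hh0f, one_pow, sub_self]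
        · rw [map_sub, πV_frob, ← hC, hD]
    have hDT : D ∉ T := hnot
    have hlt : T < T ⊔ Submodule.span k {D} := by
      refine lt_of_le_of_ne le_sup_left fun hEq => hDT ?_
      rw [hEq]
      exact Submodule.mem_sup_right (Submodule.mem_span_singleton_self D)
    have h3 : σ₀ + 1 < Module.finrank k ↥(T ⊔ Submodule.span k {D}) := by
      have := Submodule.finrank_lt_finrank_of_lt hlt
      rwa [hK.2.2] at this
    have h4 : Module.finrank k ↥(T ⊔ Submodule.span k {D})
        ≤ Module.finrank k ↥(Submodule.map (πV p k V) N) :=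
      Submodule.finrank_mono hTD
    have h5 : Module.finrank k ↥(Submodule.map (πV p k V) N)
        ≤ Module.finrank k ↥N := Submodule.finrank_map_le _ _
    omega
  refine ⟨C, hCfield, ?_⟩
  have hrankC : Module.finrank k ↥(Ktil p k V σ₀ B x C) = σ₀ + 1 :=
    finrank_Ktil p k V σ₀ B x hxli C
  exact (Submodule.eq_of_le_of_finrank_eq hle (by rw [hrankC, hLrank])).symm

end Main6

/-- `B ↦ K̃(B)` is a bijection from
`{B ∈ V ⊗ k : B - φ(B) ∈ K + φ(K)}/K` onto the set of characteristic subspaces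
`K̃ ⊆ Ṽ ⊗ k` with `v ⊗ 1 ∉ K̃` cutting out `K`. -/
theorem statement13
    (p : ℕ) [Fact p.Prime] (hodd : Odd p)
    (k : Type) [Field k] [CharP k p] [Algebra (ZMod p) k] [IsAlgClosed k]
    (V : Type) [AddCommGroup V] [Module (ZMod p) V]
    (σ₀ : ℕ) (hσ : 1 ≤ σ₀)
    (hdim : Module.finrank (ZMod p) V = 2 * σ₀)
    (B : LinearMap.BilinForm (ZMod p) V)
    (hsymm : B.IsSymm) (hnd : B.Nondegenerate)
    (hnn : ∀ W : Submodule (ZMod p) V,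
      (∀ x ∈ W, ∀ y ∈ W, B x y = 0) → Module.finrank (ZMod p) W ≠ σ₀)
    (K : Submodule k (k ⊗[ZMod p] V))
    (hK : IsCharacteristicSub p k V σ₀ B K)
    (x : Fin σ₀ → k ⊗[ZMod p] V)
    (hxspan : Submodule.span k (Set.range x) = K)
    (hxli : LinearIndependent k x)
    :
    (∀ Bf : k ⊗[ZMod p] V, IsBField p k V K Bf →
      IsGoodExtension p k V σ₀ B K (Ktil p k V σ₀ B x Bf)) ∧
    (∀ B₁ B₂ : k ⊗[ZMod p] V, IsBField p k V K B₁ → IsBField p k V K B₂ →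
      (Ktil p k V σ₀ B x B₁ = Ktil p k V σ₀ B x B₂ ↔ B₁ - B₂ ∈ K)) ∧
    (∀ L : Submodule k (k ⊗[ZMod p] (V × ZMod p × ZMod p)),
      IsGoodExtension p k V σ₀ B K L →
      ∃ Bf : k ⊗[ZMod p] V, IsBField p k V K Bf ∧ L = Ktil p k V σ₀ B x Bf) := by
  haveI hfdV : FiniteDimensional (ZMod p) V := by
    apply FiniteDimensional.of_finrank_pos
    omega
  haveI : FiniteDimensional k (k ⊗[ZMod p] V) := Module.Finite.base_change _ _ _
  haveI : FiniteDimensional k (k ⊗[ZMod p] (V × ZMod p × ZMod p)) :=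
    Module.Finite.base_change _ _ _
  obtain ⟨hK1, hKrank, hKsup⟩ := hK
  refine ⟨?_, ?_, ?_⟩
  · intro Bf hBf
    refine ⟨⟨?_, ?_, ?_⟩, ?_, ?_⟩
    · exact Ktil_isotropic p k V σ₀ B x hodd hsymm K hK1 hxspan Bf
    · exact finrank_Ktil p k V σ₀ B x hxli Bf
    · exact finrank_MKtil p k V σ₀ B x hodd hsymm K hK1 hKsup hxspan Bf hBf
    · exact ev_not_mem_Ktil p k V σ₀ B x hxli Bf
    · exact cutout_Ktil p k V σ₀ B x K hxspan Bf
  · intro B₁ B₂ _ _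
    exact Ktil_eq_iff p k V σ₀ B x hodd hsymm K hK1 hxspan B₁ B₂
  · intro L hL
    exact part3 p k V σ₀ B x hodd hsymm K ⟨hK1, hKrank, hKsup⟩ hxspan hxli L hL
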